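/- arXiv:2105.10898 — 3 statements merged into one kernel-verified Lean document; each statement's English description precedes it below -/
import Mathlib

section
/- Let Λ be a ring, X a left Λ-module with endomorphism ring T = End_Λ(X), and suppose the functor Hom_Λ(X, −) : Λ-Mod → T-Mod is fully faithful on a full subcategory containing injective envelopes. If E is an injective left Λ-module and X is a generator of Λ-Mod, then Hom_Λ(X, E) is an injective left T-module. -/
universe u v

variable (Λ : Type v) [Ring Λ]

/-- Equivalently, every `Λ`-module is a quotient of a direct sum of copies of `X`. -/
def IsGeneratorMod (X : Type v) [AddCommGroup X] [Module Λ X] : Prop :=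
  ∀ (M : Type v) [AddCommGroup M] [Module Λ M] (N : Submodule Λ M),
    (∀ f : X →ₗ[Λ] M, LinearMap.range f ≤ N) → N = ⊤

/-- `Hom_Λ(X, M)` is a left module over `T = End_Λ(X)ᵐᵒᵖ` (the endomorphism ring of
`X` with maps written on the right, as in the paper) via precomposition. -/
instance endOpModule (X : Type v) [AddCommGroup X] [Module Λ X]
    (M : Type v) [AddCommGroup M] [Module Λ M] :
    Module (Module.End Λ X)ᵐᵒᵖ (X →ₗ[Λ] M) where
  smul t g := g.comp t.unop
  one_smul g := LinearMap.comp_id g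
  mul_smul s t g := by
    show g.comp (t.unop * s.unop) = (g.comp t.unop).comp s.unop
    ext x; rfl
  smul_zero t := LinearMap.zero_comp t.unop
  smul_add t g h := LinearMap.add_comp _ _ _
  add_smul s t g := by
    show g.comp (s.unop + t.unop) = g.comp s.unop + g.comp t.unop
    ext x; simp
  zero_smul g := by
    show g.comp (0 : Module.End Λ X) = 0
    ext x; simp

/-!
By Baer's criterion it suffices to extend a `T`-linear map `g : I → Hom_Λ(X, E)` defined on a
left ideal `I` of `T`. The assignment `t x ↦ g t x` (for `t ∈ I`) is a well-defined `Λ`-linear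
map on the trace `I X ⊆ X`: a relation `∑ tₖ xₖ = 0` says that `(xₖ)` lies in the kernel `K` of
`(tₖ) : Xⁿ → X`, and since `X` generates `K`, it suffices to test `∑ g tₖ (-)` on maps
`c : X → K`, i.e. on relations `∑ tₖ ∘ cₖ = 0` in `I`, which `g` preserves by `T`-linearity.
Injectivity of `E` extends this map to `h : X → E`, and `t ↦ t • h` extends `g`.
-/

open MulOpposite LinearMap

theorem Module.Injective.exists_comp_eq_of_ker_le {R : Type u} [Ring R] {Q : Type v}
    [AddCommGroup Q] [Module R Q] [Small.{v} R] [Module.Injective R Q]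
    {V M : Type*} [AddCommGroup V] [Module R V] [AddCommGroup M] [Module R M]
    (f : V →ₗ[R] M) (g : V →ₗ[R] Q) (hfg : ker f ≤ ker g) :
    ∃ h : M →ₗ[R] Q, h ∘ₗ f = g := by
  obtain ⟨h, hh⟩ := Module.Injective.extension_property R Q _ M ((ker f).liftQ f le_rfl)
    (by rw [← ker_eq_bot]; exact Submodule.ker_liftQ_eq_bot _ _ _ le_rfl)
    ((ker f).liftQ g hfg)
  refine ⟨h, ?_⟩
  rw [← (ker f).liftQ_mkQ f le_rfl, ← comp_assoc, hh, Submodule.liftQ_mkQ]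

theorem LinearMap.sum_comp_proj_comp {R : Type*} [Semiring R] {ι : Type*} [Fintype ι]
    {M N W : Type*} [AddCommMonoid M] [Module R M] [AddCommMonoid N] [Module R N]
    [AddCommMonoid W] [Module R W] (H : ι → N →ₗ[R] W) (φ : M →ₗ[R] ι → N) :
    (∑ k, H k ∘ₗ proj k) ∘ₗ φ = ∑ k, H k ∘ₗ (proj k ∘ₗ φ) := by
  ext
  simp

theorem Finsupp.lsum_apply_eq_sum_comp_proj {R : Type*} [Semiring R] {ι : Type*}
    {M W : Type*} [AddCommMonoid M] [Module R M] [AddCommMonoid W] [Module R W]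
    (H : ι → M →ₗ[R] W) (v : ι →₀ M) :
    Finsupp.lsum ℕ H v = (∑ k : v.support, H k ∘ₗ proj k) fun k => v k := by
  simp [Finsupp.sum, Finset.sum_attach v.support fun k => H k (v k)]

section

variable {Λ} {X : Type v} [AddCommGroup X] [Module Λ X]

@[simp]
theorem endOpModule_smul_def {M : Type v} [AddCommGroup M] [Module Λ M]
    (t : (Module.End Λ X)ᵐᵒᵖ) (g : X →ₗ[Λ] M) : t • g = g ∘ₗ t.unop :=
  rfl

theorem IsGeneratorMod.eq_zero_of_forall_comp_eq_zero (hgen : IsGeneratorMod Λ X)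
    {M : Type v} {N : Type*} [AddCommGroup M] [Module Λ M] [AddCommGroup N] [Module Λ N]
    (φ : M →ₗ[Λ] N) (hφ : ∀ f : X →ₗ[Λ] M, φ ∘ₗ f = 0) : φ = 0 :=
  ker_eq_top.mp <| hgen M (ker φ) fun f => range_le_ker_iff.mpr (hφ f)

variable {Y Z : Type*} [AddCommGroup Y] [Module Λ Y] [AddCommGroup Z] [Module Λ Z]

theorem IsGeneratorMod.ker_le_ker_of_relations (hgen : IsGeneratorMod Λ X)
    {ι : Type v} [Fintype ι] (F : ι → X →ₗ[Λ] Y) (G : ι → X →ₗ[Λ] Z)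
    (hFG : ∀ c : ι → Module.End Λ X, ∑ k, F k ∘ₗ c k = 0 → ∑ k, G k ∘ₗ c k = 0) :
    ker (∑ k, F k ∘ₗ proj k) ≤ ker (∑ k, G k ∘ₗ proj k) := by
  set K := ker (∑ k, F k ∘ₗ proj k)
  have hK : (∑ k, G k ∘ₗ proj k) ∘ₗ K.subtype = 0 := by
    refine hgen.eq_zero_of_forall_comp_eq_zero _ fun f => ?_
    rw [comp_assoc, sum_comp_proj_comp]
    refine hFG _ ?_
    rw [← sum_comp_proj_comp, ← comp_assoc, comp_ker_subtype, zero_comp]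
  exact fun x hx => congr($hK ⟨x, hx⟩)

theorem IsGeneratorMod.ker_finsuppLsum_le_of_relations (hgen : IsGeneratorMod Λ X) {ι : Type v}
    (F : ι → X →ₗ[Λ] Y) (G : ι → X →ₗ[Λ] Z)
    (hFG : ∀ (s : Finset ι) (c : s → Module.End Λ X),
      ∑ k : s, F k ∘ₗ c k = 0 → ∑ k : s, G k ∘ₗ c k = 0) :
    ker (Finsupp.lsum ℕ F) ≤ ker (Finsupp.lsum ℕ G) := by
  intro v hv
  rw [mem_ker, Finsupp.lsum_apply_eq_sum_comp_proj] at hv ⊢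
  exact hgen.ker_le_ker_of_relations (fun k : v.support => F k) (fun k => G k) (hFG _) hv

theorem sum_comp_eq_zero_of_ideal_relation {E : Type v} [AddCommGroup E] [Module Λ E]
    {I : Submodule (Module.End Λ X)ᵐᵒᵖ (Module.End Λ X)ᵐᵒᵖ}
    (g : I →ₗ[(Module.End Λ X)ᵐᵒᵖ] X →ₗ[Λ] E) {κ : Type*} [Fintype κ] (t : κ → I)
    (c : κ → Module.End Λ X) (hc : ∑ k, (t k).1.unop ∘ₗ c k = 0) :
    ∑ k, g (t k) ∘ₗ c k = 0 := by
  have hrel : ∑ k, op (c k) • t k = 0 := by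
    apply Subtype.ext
    apply unop_injective
    simpa [Finset.unop_sum, Module.End.mul_eq_comp] using hc
  simpa using congr(g $hrel)

end

theorem hom_X_E_injective_T_module
    (X : Type v) [AddCommGroup X] [Module Λ X] (hgen : IsGeneratorMod Λ X)
    (E : ModuleCat.{v} Λ) (hE : Module.Injective Λ E) :
    Module.Injective (Module.End Λ X)ᵐᵒᵖ (X →ₗ[Λ] E) := by
  refine Module.Baer.injective fun I g => ?_
  obtain ⟨h, hh⟩ := Module.Injective.exists_comp_eq_of_ker_le
    (Finsupp.lsum ℕ fun t : I => t.1.unop) (Finsupp.lsum ℕ fun t => g t)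
    (hgen.ker_finsuppLsum_le_of_relations _ _ fun _ c =>
      sum_comp_eq_zero_of_ideal_relation g (fun k => k.1) c)
  refine ⟨toSpanSingleton _ _ h, fun t ht => ?_⟩
  ext x
  simpa using congr($hh (Finsupp.single ⟨t, ht⟩ x))
end

section
/- Let Λ be a ring, X a generator in Λ-Mod, and T = End_Λ(X). Then the functor Hom_Λ(X, −) preserves essential extensions: if N ≤ M is an essential Λ-submodule, then Hom_Λ(X, N) is an essential T-submodule of Hom_Λ(X, M). -/
universe u v

variable (Λ : Type v) [Ring Λ]

/-- The image of `Hom_Λ(X, N)` in `Hom_Λ(X, M)`, i.e. the maps `X → M` landing in the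
submodule `N`, as a `T`-submodule of `Hom_Λ(X, M)`. -/
def homInto (X : Type v) [AddCommGroup X] [Module Λ X]
    (M : Type v) [AddCommGroup M] [Module Λ M] (N : Submodule Λ M) :
    Submodule (Module.End Λ X)ᵐᵒᵖ (X →ₗ[Λ] M) where
  carrier := {g | LinearMap.range g ≤ N}
  add_mem' := by
    intro g h hg hh
    rintro x ⟨y, rfl⟩
    exact N.add_mem (hg ⟨y, rfl⟩) (hh ⟨y, rfl⟩)
  zero_mem' := by
    rintro x ⟨y, rfl⟩
    simp only [LinearMap.zero_apply]
    exact N.zero_mem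
  smul_mem' := by
    rintro t g hg x ⟨y, rfl⟩
    exact hg ⟨t.unop y, rfl⟩

namespace IsGeneratorMod

variable {Λ} {X : Type v} [AddCommGroup X] [Module Λ X]

theorem exists_comp_ne_zero (hgen : IsGeneratorMod Λ X)
    {P M : Type v} [AddCommGroup P] [Module Λ P] [AddCommGroup M] [Module Λ M]
    {k : P →ₗ[Λ] M} (hk : k ≠ 0) : ∃ f : X →ₗ[Λ] P, k ∘ₗ f ≠ 0 := by
  by_contra! hcomp
  refine hk (LinearMap.ker_eq_top.mp (hgen P _ fun f => ?_))
  rw [LinearMap.range_le_ker_iff]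
  exact hcomp f

/-- `g` does not vanish on `g⁻¹ N` because `N` meets its image, and the generator `X` detects this
through a map `X → g⁻¹ N`. -/
theorem exists_comp_ne_zero_range_le (hgen : IsGeneratorMod Λ X)
    {M : Type v} [AddCommGroup M] [Module Λ M] {N : Submodule Λ M} {g : X →ₗ[Λ] M}
    (hNg : N ⊓ LinearMap.range g ≠ ⊥) :
    ∃ h : Module.End Λ X, g ∘ₗ h ≠ 0 ∧ LinearMap.range (g ∘ₗ h) ≤ N := by
  set P := N.comap g
  obtain ⟨_, ⟨hmN, x, rfl⟩, hgx⟩ := Submodule.exists_mem_ne_zero_of_ne_bot hNg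
  have hrestrict : g ∘ₗ P.subtype ≠ 0 := fun h0 =>
    hgx (LinearMap.congr_fun h0 (⟨x, hmN⟩ : P))
  obtain ⟨f, hf⟩ := hgen.exists_comp_ne_zero hrestrict
  refine ⟨P.subtype ∘ₗ f, hf, ?_⟩
  rintro _ ⟨y, rfl⟩
  exact (f y).2

end IsGeneratorMod

/-- If `X` is a generator of `Λ`-Mod, `T = End_Λ(X)`, and `N ≤ M` is an
essential `Λ`-submodule, then `Hom_Λ(X, N)` is an essential `T`-submodule of
`Hom_Λ(X, M)`, i.e. `Hom_Λ(X,−)` preserves essential extensions. -/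
theorem hom_preserves_essential_extensions
    (X : Type v) [AddCommGroup X] [Module Λ X] (hgen : IsGeneratorMod Λ X)
    (M : Type v) [AddCommGroup M] [Module Λ M] (N : Submodule Λ M)
    (hess : ∀ L : Submodule Λ M, L ≠ ⊥ → N ⊓ L ≠ ⊥) :
    ∀ L : Submodule (Module.End Λ X)ᵐᵒᵖ (X →ₗ[Λ] M), L ≠ ⊥ →
      homInto Λ X M N ⊓ L ≠ ⊥ := by
  intro L hL
  obtain ⟨g, hgL, hg0⟩ := Submodule.exists_mem_ne_zero_of_ne_bot hL
  have hNg : N ⊓ LinearMap.range g ≠ ⊥ := hess _ (mt LinearMap.range_eq_bot.mp hg0)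
  obtain ⟨h, hgh0, hghN⟩ := hgen.exists_comp_ne_zero_range_le hNg
  have hghL : g ∘ₗ h ∈ L := L.smul_mem (MulOpposite.op h) hgL
  exact (Submodule.ne_bot_iff _).mpr ⟨g ∘ₗ h, ⟨hghN, hghL⟩, hgh0⟩
end

section
/- Let Λ be a left artinian ring and suppose every left Λ-module is a direct sum of finitely generated modules. Then every finitely generated left Λ-module is a finite direct sum of indecomposable modules, and hence Add(V) = Λ-Mod, where V is the direct sum of a complete set of representatives of isomorphism classes of finitely generated indecomposable left Λ-modules. -/
/-!
Over a left artinian ring every finitely generated module is artinian, and an artinian module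
is a finite direct sum of indecomposables by well-founded induction on submodules: a nonzero
submodule that is not indecomposable is the direct sum of two strictly smaller ones.
A left artinian ring is also noetherian, so these summands are finitely generated. Decomposing
each finitely generated summand of an arbitrary module in this way and replacing every
indecomposable piece by its representative `V i` shows that every module is already
isomorphic to a direct sum of copies of the `V i`, so one may take `Q = 0`.
-/

universe v

/-- A module is indecomposable if it is nonzero and admits no nontrivial direct sum
decomposition. -/
def IndecompM (R : Type*) [Ring R] (M : Type*) [AddCommGroup M] [Module R M] : Prop :=
  Nontrivial M ∧ ∀ A B : Submodule R M, IsCompl A B → A = ⊥ ∨ B = ⊥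

universe u

open scoped DirectSum

section

variable {Λ : Type*} [Ring Λ] {M : Type u} [AddCommGroup M] [Module Λ M]

theorem Submodule.exists_disjoint_sup_eq_of_not_indecompM {S : Submodule Λ M} (hS : S ≠ ⊥)
    (h : ¬IndecompM Λ S) :
    ∃ A B : Submodule Λ M, A < S ∧ B < S ∧ Disjoint A B ∧ A ⊔ B = S := by
  have : Nontrivial S := Submodule.nontrivial_iff_ne_bot.mpr hS
  obtain ⟨A, B, hAB, hA, hB⟩ : ∃ A B : Submodule Λ S, IsCompl A B ∧ A ≠ ⊥ ∧ B ≠ ⊥ := by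
    simpa [IndecompM, this] using h
  obtain ⟨hdisj, hsup⟩ := Set.Iic.isCompl_iff.mp (S.mapIic.isCompl hAB)
  have map_ne_bot {C : Submodule Λ S} (hC : C ≠ ⊥) : (S.mapIic C : Submodule Λ M) ≠ ⊥ := by
    rwa [Ne, ← Set.Iic.coe_bot S, Subtype.coe_inj, ← S.mapIic.map_bot,
      EmbeddingLike.apply_eq_iff_eq]
  refine ⟨_, _, (S.mapIic A).2.lt_of_ne fun h ↦ ?_, (S.mapIic B).2.lt_of_ne fun h ↦ ?_,
    hdisj, hsup⟩
  · exact map_ne_bot hB (hdisj.symm.eq_bot_of_le ((S.mapIic B).2.trans h.ge))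
  · exact map_ne_bot hA (hdisj.eq_bot_of_le ((S.mapIic A).2.trans h.ge))

theorem Submodule.exists_finset_supIndep_indecompM [IsArtinian Λ M] (S : Submodule Λ M) :
    ∃ s : Finset (Submodule Λ M), s.SupIndep id ∧ s.sup id = S ∧ ∀ N ∈ s, IndecompM Λ N := by
  classical
  induction S using WellFoundedLT.induction with | ind S ih => ?_
  by_cases hS : S = ⊥
  · exact ⟨∅, Finset.supIndep_empty _, by simp [hS], by simp⟩
  by_cases hind : IndecompM Λ S
  · exact ⟨{S}, Finset.supIndep_singleton _ _, Finset.sup_singleton, by simpa using hind⟩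
  obtain ⟨A, B, hA, hB, hdisj, hsup⟩ := S.exists_disjoint_sup_eq_of_not_indecompM hS hind
  obtain ⟨s, hs, rfl, hsind⟩ := ih A hA
  obtain ⟨t, ht, rfl, htind⟩ := ih B hB
  refine ⟨s ∪ t, hs.union ht hdisj, by rw [Finset.sup_union, hsup], ?_⟩
  simpa [or_imp, forall_and] using ⟨hsind, htind⟩

theorem exists_isInternal_fin_indecompM [IsArtinian Λ M] :
    ∃ (n : ℕ) (N : Fin n → Submodule Λ M), DirectSum.IsInternal N ∧ ∀ k, IndecompM Λ (N k) := by
  obtain ⟨s, hs, hsup, hind⟩ := (⊤ : Submodule Λ M).exists_finset_supIndep_indecompM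
  let e := s.equivFin.symm
  refine ⟨s.card, fun k ↦ e k, ?_, fun k ↦ hind _ (e k).2⟩
  refine DirectSum.isInternal_submodule_of_iSupIndep_of_iSup_eq_top
    (hs.independent.comp e.injective) ?_
  rw [e.iSup_comp (g := fun x : s ↦ (x : Submodule Λ M)), ← hsup, Finset.sup_eq_iSup,
    iSup_subtype']
  rfl

noncomputable def DirectSum.IsInternal.sigmaLinearEquiv {κ : Type*} [DecidableEq κ]
    {J : κ → Type*} [∀ k, DecidableEq (J k)] {N : κ → Submodule Λ M} (hN : IsInternal N)
    {P : ∀ k, J k → Submodule Λ (N k)} (hP : ∀ k, IsInternal (P k)) :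
    (⨁ a : Σ k, J k, P a.1 a.2) ≃ₗ[Λ] M :=
  sigmaLcurryEquiv Λ (δ := fun k j ↦ P k j) ≪≫ₗ
    DFinsupp.mapRange.linearEquiv (fun k ↦ LinearEquiv.ofBijective (coeLinearMap _) (hP k)) ≪≫ₗ
    LinearEquiv.ofBijective (coeLinearMap _) hN

theorem exists_linearEquiv_directSum_of_isInternal_of_fg [IsArtinian Λ Λ] {κ : Type u}
    [DecidableEq κ] {N : κ → Submodule Λ M} (hN : DirectSum.IsInternal N)
    (hfg : ∀ k, (N k).FG) {ι : Type*} {V : ι → Type*} [∀ i, AddCommGroup (V i)]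
    [∀ i, Module Λ (V i)]
    (hcomplete : ∀ (P : Type u) [AddCommGroup P] [Module Λ P],
      Module.Finite Λ P → IndecompM Λ P → ∃ i, Nonempty (P ≃ₗ[Λ] V i)) :
    ∃ (A : Type u) (_ : DecidableEq A) (f : A → ι), Nonempty (M ≃ₗ[Λ] ⨁ a, V (f a)) := by
  have (k : κ) : Module.Finite Λ (N k) := Module.Finite.iff_fg.mpr (hfg k)
  choose n P hP hPind using fun k ↦ exists_isInternal_fin_indecompM (Λ := Λ) (M := N k)
  choose f hf using fun k j ↦ hcomplete (P k j) inferInstance (hPind k j)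
  exact ⟨Σ k, Fin (n k), inferInstance, fun a ↦ f a.1 a.2,
    ⟨(hN.sigmaLinearEquiv hP).symm ≪≫ₗ DFinsupp.mapRange.linearEquiv fun a ↦ (hf a.1 a.2).some⟩⟩

end

theorem finite_decomposition_and_add_V_eq_Mod_general
    (Λ : Type v) [Ring Λ] [IsArtinian Λ Λ]
    (hdec : ∀ (M : Type v) [AddCommGroup M] [Module Λ M],
      ∃ (κ : Type v) (_ : DecidableEq κ) (N : κ → Submodule Λ M),
        DirectSum.IsInternal N ∧ ∀ k, (N k).FG)
    (ι : Type v)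
    (V : ι → Type v) [∀ i, AddCommGroup (V i)] [∀ i, Module Λ (V i)]
    (hcomplete : ∀ (M : Type v) [AddCommGroup M] [Module Λ M],
      Module.Finite Λ M → IndecompM Λ M → ∃ i, Nonempty (M ≃ₗ[Λ] V i)) :
    -- (1) every finitely generated module is a finite direct sum of indecomposables
    (∀ (M : Type v) [AddCommGroup M] [Module Λ M], Module.Finite Λ M →
      ∃ (n : ℕ) (N : Fin n → Submodule Λ M),
        DirectSum.IsInternal N ∧ ∀ k, IndecompM Λ (N k)) ∧
    -- (2) `Add(V) = Λ-Mod`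
    (∀ (M : Type v) [AddCommGroup M] [Module Λ M],
      ∃ (A : Type v) (_ : DecidableEq A) (f : A → ι)
        (Q : Type v) (_ : AddCommGroup Q) (_ : Module Λ Q),
        Nonempty ((M × Q) ≃ₗ[Λ] DirectSum A fun a => V (f a))) := by
  refine ⟨fun M _ _ _ ↦ exists_isInternal_fin_indecompM, fun M _ _ ↦ ?_⟩
  obtain ⟨κ, _, N, hN, hfg⟩ := hdec M
  obtain ⟨A, _, f, ⟨e⟩⟩ := exists_linearEquiv_directSum_of_isInternal_of_fg hN hfg hcomplete
  exact ⟨A, inferInstance, f, PUnit, inferInstance, inferInstance, ⟨LinearEquiv.prodUnique ≪≫ₗ e⟩⟩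

/-- Let `Λ` be left artinian and suppose every left `Λ`-module is a
direct sum of finitely generated (sub)modules.  Then every finitely generated left
`Λ`-module is a finite direct sum of indecomposable modules, and `Add(V) = Λ-Mod`:
every left `Λ`-module is (isomorphic to) a direct summand of a direct sum of copies of
the modules `V i`, where `{V i}` is a complete set of representatives of the
isomorphism classes of finitely generated indecomposable left `Λ`-modules. -/
theorem finite_decomposition_and_add_V_eq_Mod
    (Λ : Type v) [Ring Λ] [IsArtinian Λ Λ]
    (hdec : ∀ (M : Type v) [AddCommGroup M] [Module Λ M],
      ∃ (κ : Type v) (_ : DecidableEq κ) (N : κ → Submodule Λ M),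
        DirectSum.IsInternal N ∧ ∀ k, (N k).FG)
    (ι : Type v) [DecidableEq ι]
    (V : ι → Type v) [∀ i, AddCommGroup (V i)] [∀ i, Module Λ (V i)]
    [∀ i, Module.Finite Λ (V i)]
    (hind : ∀ i, IndecompM Λ (V i))
    (hpairwise : ∀ i j, i ≠ j → IsEmpty (V i ≃ₗ[Λ] V j))
    (hcomplete : ∀ (M : Type v) [AddCommGroup M] [Module Λ M],
      Module.Finite Λ M → IndecompM Λ M → ∃ i, Nonempty (M ≃ₗ[Λ] V i)) :
    -- (1) every finitely generated module is a finite direct sum of indecomposables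
    (∀ (M : Type v) [AddCommGroup M] [Module Λ M], Module.Finite Λ M →
      ∃ (n : ℕ) (N : Fin n → Submodule Λ M),
        DirectSum.IsInternal N ∧ ∀ k, IndecompM Λ (N k)) ∧
    -- (2) `Add(V) = Λ-Mod`
    (∀ (M : Type v) [AddCommGroup M] [Module Λ M],
      ∃ (A : Type v) (_ : DecidableEq A) (f : A → ι)
        (Q : Type v) (_ : AddCommGroup Q) (_ : Module Λ Q),
        Nonempty ((M × Q) ≃ₗ[Λ] DirectSum A fun a => V (f a))) :=
  finite_decomposition_and_add_V_eq_Mod_general Λ hdec ι V hcomplete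
end
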